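/- Let L_1, L_2, L_3 be three distinct non-coplanar lines in P^3 through a common point P. Let A, B ∈ L_1, C, D ∈ L_2, E ∈ L_3 be five points all different from P (with A ≠ B, C ≠ D). Let I be the radical ideal of Z = {A,B,C,D,E}. Then α(I) = 2 and α(I^{(2)}) = 3. -/
import Mathlib


open MvPolynomial

noncomputable section

/-- Apply a list of partial derivatives to a polynomial. -/
def derivList {n : ℕ} (L : List (Fin (n + 1))) (f : MvPolynomial (Fin (n + 1)) ℂ) :
    MvPolynomial (Fin (n + 1)) ℂ :=
  L.foldr (fun i g => MvPolynomial.pderiv i g) f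

/-- `f` vanishes to order at least `k` at the point with homogeneous coordinates `p`:
all partial derivatives of total order `< k` vanish at `p`. -/
def VanishTo {n : ℕ} (f : MvPolynomial (Fin (n + 1)) ℂ) (p : Fin (n + 1) → ℂ) (k : ℕ) : Prop :=
  ∀ L : List (Fin (n + 1)), L.length < k → MvPolynomial.eval p (derivList L f) = 0

/-- The `k`-th differential power of the ideal of `Z`: all polynomials vanishing to order
at least `k` at every point of `Z`. -/
def DiffPow {n : ℕ} (Z : Set (Fin (n + 1) → ℂ)) (k : ℕ) : Set (MvPolynomial (Fin (n + 1)) ℂ) :=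
  {f | ∀ p ∈ Z, VanishTo f p k}

/-- Initial degree: least degree of a nonzero homogeneous element of `S`. -/
def alphaSet {n : ℕ} (S : Set (MvPolynomial (Fin (n + 1)) ℂ)) : ℕ :=
  sInf {d | ∃ f ∈ S, f ≠ 0 ∧ MvPolynomial.IsHomogeneous f d}

/-- `α(I^{(k)})` for `I` the radical ideal of the point set `Z` (symbolic powers of such
ideals coincide with differential powers by Nagata–Zariski). -/
def alphaZ {n : ℕ} (Z : Set (Fin (n + 1) → ℂ)) (k : ℕ) : ℕ :=
  alphaSet (DiffPow Z k)

/-- Two homogeneous coordinate vectors define the same projective point. -/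
def ProjEq {n : ℕ} (p q : Fin (n + 1) → ℂ) : Prop :=
  ∃ t : ℂ, t ≠ 0 ∧ q = t • p

/-- The hyperplanes with covectors `a i` are in general position: every at most `n + 1`
of the covectors are linearly independent (equivalently, any `n` of the hyperplanes meet
in exactly one point and no `n + 1` of them have a common point). -/
def GenPos {n d : ℕ} (a : Fin d → (Fin (n + 1) → ℂ)) : Prop :=
  ∀ S : Finset (Fin d), S.card ≤ n + 1 →
    LinearIndependent ℂ (fun i : {x : Fin d // x ∈ S} => a i.1)

/-- The linear form with covector `a`. -/
def linForm {n : ℕ} (a : Fin (n + 1) → ℂ) : MvPolynomial (Fin (n + 1)) ℂ :=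
  ∑ i, MvPolynomial.C (a i) * MvPolynomial.X i

/-! ### Auxiliary lemmas -/

section Aux

variable {n : ℕ}

lemma degree_eq_sum_univ {σ : Type*} [Fintype σ] (m : σ →₀ ℕ) :
    m.degree = ∑ i, m i := by
  rw [Finsupp.degree]
  exact Finset.sum_subset (Finset.subset_univ _)
    (fun i _ h => Finsupp.notMem_support_iff.mp h)

lemma single_of_degree_one {σ : Type*} [DecidableEq σ] (m : σ →₀ ℕ) (hm : m.degree = 1) :
    ∃ i, m = Finsupp.single i 1 := by
  have hne : m ≠ 0 := by
    intro h; subst h; rw [map_zero] at hm; exact absurd hm (by simp)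
  obtain ⟨i, hi⟩ := Finsupp.support_nonempty_iff.mpr hne
  refine ⟨i, ?_⟩
  have hsum : m i + ∑ j ∈ m.support.erase i, m j = 1 := by
    rw [Finset.add_sum_erase _ _ hi]; exact hm
  have hmi : m i ≠ 0 := Finsupp.mem_support_iff.mp hi
  have h1 : m i = 1 := by omega
  have h0 : ∀ j ∈ m.support.erase i, m j = 0 := by
    rw [← Finset.sum_eq_zero_iff]; omega
  ext j
  rcases eq_or_ne j i with rfl | hji
  · simp [h1]
  · rw [Finsupp.single_apply, if_neg (Ne.symm hji)]
    by_cases hj : j ∈ m.support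
    · exact h0 j (Finset.mem_erase.mpr ⟨hji, hj⟩)
    · exact Finsupp.notMem_support_iff.mp hj

lemma coeff_linForm {n : ℕ} (a : Fin (n + 1) → ℂ) (i : Fin (n + 1)) :
    coeff (Finsupp.single i 1) (linForm a) = a i := by
  rw [linForm]
  simp only [coeff_sum, coeff_C_mul, coeff_X']
  rw [Finset.sum_eq_single i]
  · simp
  · intro j _ hj
    rw [if_neg, mul_zero]
    exact fun h => hj (by simpa using (Finsupp.single_left_inj one_ne_zero).mp h)
  · simp

lemma eval_linForm {n : ℕ} (a : Fin (n + 1) → ℂ) (x : Fin (n + 1) → ℂ) :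
    eval x (linForm a) = ∑ i, a i * x i := by
  simp [linForm]

lemma linForm_isHomogeneous {n : ℕ} (a : Fin (n + 1) → ℂ) : (linForm a).IsHomogeneous 1 :=
  IsHomogeneous.sum _ _ _ (fun i _ => isHomogeneous_C_mul_X (a i) i)

lemma homog_one_eq_linForm {n : ℕ} {f : MvPolynomial (Fin (n + 1)) ℂ}
    (hf : f.IsHomogeneous 1) :
    f = linForm (fun i => coeff (Finsupp.single i 1) f) := by
  ext m
  by_cases hm : m.degree = 1
  · obtain ⟨i, rfl⟩ := single_of_degree_one m hm
    rw [coeff_linForm]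
  · rw [hf.coeff_eq_zero hm, (linForm_isHomogeneous _).coeff_eq_zero hm]

lemma homog_zero_eq_C {n : ℕ} {f : MvPolynomial (Fin (n + 1)) ℂ} (hf : f.IsHomogeneous 0) :
    f = C (coeff 0 f) := by
  ext m
  rcases eq_or_ne m 0 with rfl | hm
  · simp
  · rw [hf.coeff_eq_zero (by rwa [Ne, Finsupp.degree_eq_zero_iff]), coeff_C, if_neg (Ne.symm hm)]

/-- Euler's identity for a monomial. -/
lemma euler_monomial {n : ℕ} (m : Fin (n + 1) →₀ ℕ) (c : ℂ) :
    ∑ i, X i * pderiv i (monomial m c) = C ((m.degree : ℂ)) * monomial m c := by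
  have key : ∀ i : Fin (n + 1),
      X i * pderiv i (monomial m c) = monomial m (c * m i) := by
    intro i
    rw [pderiv_monomial, X, monomial_mul, one_mul]
    by_cases hmi : m i = 0
    · rw [hmi]; simp
    · have hEq : Finsupp.single i 1 + (m - Finsupp.single i 1) = m := by
        ext j
        rcases eq_or_ne j i with rfl | hji
        · simp only [Finsupp.add_apply, Finsupp.tsub_apply, Finsupp.single_eq_same]
          omega
        · simp [Finsupp.single_apply, Ne.symm hji]
      rw [hEq]
  rw [Finset.sum_congr rfl (fun i _ => key i), C_mul_monomial, ← map_sum,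
    ← Finset.mul_sum]
  congr 1
  rw [degree_eq_sum_univ, mul_comm]
  push_cast
  ring

/-- Euler's identity for a homogeneous polynomial. -/
lemma euler {n : ℕ} {f : MvPolynomial (Fin (n + 1)) ℂ} {d : ℕ} (hf : f.IsHomogeneous d) :
    ∑ i, X i * pderiv i f = C (d : ℂ) * f := by
  have hdeg : ∀ m ∈ f.support, (m : Fin (n + 1) →₀ ℕ).degree = d := by
    intro m hm
    by_contra h
    exact Finsupp.mem_support_iff.mp hm (hf.coeff_eq_zero h)
  conv_lhs => rw [f.as_sum]
  conv_rhs => rw [f.as_sum]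
  rw [Finset.mul_sum]
  rw [Finset.sum_congr rfl (fun i (_ : i ∈ Finset.univ) => by
    rw [map_sum, Finset.mul_sum])]
  rw [Finset.sum_comm]
  refine Finset.sum_congr rfl (fun m hm => ?_)
  rw [euler_monomial, hdeg m hm]

/-- The partial derivative of a homogeneous polynomial is homogeneous. -/
lemma pderiv_isHomogeneous {n : ℕ} {f : MvPolynomial (Fin (n + 1)) ℂ} {d : ℕ}
    (hf : f.IsHomogeneous d) (i : Fin (n + 1)) :
    (pderiv i f).IsHomogeneous (d - 1) := by
  have hdeg : ∀ m ∈ f.support, (m : Fin (n + 1) →₀ ℕ).degree = d := by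
    intro m hm
    by_contra h
    exact Finsupp.mem_support_iff.mp hm (hf.coeff_eq_zero h)
  conv => rw [f.as_sum]
  rw [map_sum]
  refine IsHomogeneous.sum _ _ _ (fun m hm => ?_)
  rw [pderiv_monomial]
  by_cases hmi : m i = 0
  · rw [hmi]; simpa using isHomogeneous_zero _ _ _
  · refine isHomogeneous_monomial _ ?_
    simp only [degree_eq_sum_univ] at hdeg ⊢
    have h1 : ∑ j, ((m - Finsupp.single i 1 : Fin (n + 1) →₀ ℕ)) j
        = (m i - 1) + ∑ j ∈ Finset.univ.erase i, m j := by
      rw [← Finset.add_sum_erase _ _ (Finset.mem_univ i)]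
      congr 1
      · simp
      · exact Finset.sum_congr rfl (fun j hj => by
          simp [Finsupp.single_apply, Ne.symm (Finset.mem_erase.mp hj).1])
    have h2 : m i + ∑ j ∈ Finset.univ.erase i, m j = d := by
      rw [Finset.add_sum_erase _ _ (Finset.mem_univ i)]
      exact hdeg m hm
    rw [h1]
    omega

end Aux

section Main

/-- Vanishing to order 1 of a product with one vanishing factor. -/
lemma vanishTo_one_mul {f g : MvPolynomial (Fin 4) ℂ} {q : Fin 4 → ℂ}
    (hf : eval q f = 0) : VanishTo (f * g) q 1 := by
  intro L hL
  have hL0 : L = [] := by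
    cases L with
    | nil => rfl
    | cons i L' => simp at hL
  subst hL0
  simp [derivList, hf]

/-- Vanishing to order 2 of a triple product with two vanishing factors. -/
lemma vanishTo_two_mul {f g h : MvPolynomial (Fin 4) ℂ} {q : Fin 4 → ℂ}
    (hf : eval q f = 0) (hg : eval q g = 0) : VanishTo (f * g * h) q 2 := by
  intro L hL
  rcases L with _ | ⟨i, _ | ⟨j, L'⟩⟩
  · simp [derivList, hf, hg]
  · simp [derivList, pderiv_mul, hf, hg]
  · simp only [List.length_cons] at hL
    omega

/-- five points `A, B ∈ L₁`, `C, D ∈ L₂`, `E ∈ L₃` on three distinct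
non-coplanar lines through a common point `P` in `ℙ^3`, all different from `P`, satisfy
`α(I) = 2` and `α(I^{(2)}) = 3` for their radical ideal `I`. -/
theorem five_points_on_three_concurrent_lines (p v₁ v₂ v₃ : Fin 4 → ℂ)
    (hLI : LinearIndependent ℂ ![p, v₁, v₂, v₃])
    (a b c e g : ℂ) (hab : a ≠ b) (hce : c ≠ e) :
    alphaZ ({a • p + v₁, b • p + v₁, c • p + v₂, e • p + v₂, g • p + v₃} :
      Set (Fin 4 → ℂ)) 1 = 2 ∧
    alphaZ ({a • p + v₁, b • p + v₁, c • p + v₂, e • p + v₂, g • p + v₃} :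
      Set (Fin 4 → ℂ)) 2 = 3 := by
  set Z : Set (Fin 4 → ℂ) :=
    {a • p + v₁, b • p + v₁, c • p + v₂, e • p + v₂, g • p + v₃} with hZ
  -- membership facts
  have mA : a • p + v₁ ∈ Z := by simp [hZ]
  have mB : b • p + v₁ ∈ Z := by simp [hZ]
  have mC : c • p + v₂ ∈ Z := by simp [hZ]
  have mE : e • p + v₂ ∈ Z := by simp [hZ]
  have mG : g • p + v₃ ∈ Z := by simp [hZ]
  -- the basis
  have hcard : Fintype.card (Fin 4) = Module.finrank ℂ (Fin 4 → ℂ) := by simp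
  set bs := basisOfLinearIndependentOfCardEqFinrank hLI hcard with hbsdef
  have hbs : ⇑bs = ![p, v₁, v₂, v₃] := coe_basisOfLinearIndependentOfCardEqFinrank hLI hcard
  have hb0 : bs 0 = p := by rw [hbs]; rfl
  have hb1 : bs 1 = v₁ := by rw [hbs]; rfl
  have hb2 : bs 2 = v₂ := by rw [hbs]; rfl
  have hb3 : bs 3 = v₃ := by rw [hbs]; rfl
  have hcoord : ∀ j k : Fin 4, bs.coord j (bs k) = if j = k then 1 else 0 := by
    intro j k
    rw [Module.Basis.coord_apply, bs.repr_self]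
    simp [Finsupp.single_apply, eq_comm]
  -- the three linear forms
  set av : Fin 4 → (Fin 4 → ℂ) :=
    fun j i => bs.coord j (fun j' => if i = j' then 1 else 0) with havdef
  have heval : ∀ (j : Fin 4) (x : Fin 4 → ℂ), eval x (linForm (av j)) = bs.coord j x := by
    intro j x
    rw [eval_linForm, LinearMap.pi_apply_eq_sum_univ (bs.coord j) x]
    exact Finset.sum_congr rfl fun i _ => by rw [smul_eq_mul, mul_comm]
  have hev : ∀ (j k : Fin 4) (t : ℂ), eval (t • p + bs k) (linForm (av j))
      = t * (if j = 0 then 1 else 0) + (if j = k then 1 else 0) := by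
    intro j k t
    rw [heval, ← hb0, map_add, map_smul, hcoord, hcoord, smul_eq_mul]
  -- nonvanishing
  have hl_ne : ∀ j : Fin 4, linForm (av j) ≠ 0 := by
    intro j h
    have := heval j (bs j)
    rw [h, hcoord] at this
    simp at this
  -- evaluations at the five points
  have hevA : ∀ j : Fin 4, eval (a • p + v₁) (linForm (av j))
      = a * (if j = 0 then 1 else 0) + (if j = 1 then 1 else 0) := by
    intro j; rw [← hb1]; exact hev j 1 a
  have hevB : ∀ j : Fin 4, eval (b • p + v₁) (linForm (av j))
      = b * (if j = 0 then 1 else 0) + (if j = 1 then 1 else 0) := by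
    intro j; rw [← hb1]; exact hev j 1 b
  have hevC : ∀ j : Fin 4, eval (c • p + v₂) (linForm (av j))
      = c * (if j = 0 then 1 else 0) + (if j = 2 then 1 else 0) := by
    intro j; rw [← hb2]; exact hev j 2 c
  have hevE : ∀ j : Fin 4, eval (e • p + v₂) (linForm (av j))
      = e * (if j = 0 then 1 else 0) + (if j = 2 then 1 else 0) := by
    intro j; rw [← hb2]; exact hev j 2 e
  have hevG : ∀ j : Fin 4, eval (g • p + v₃) (linForm (av j))
      = g * (if j = 0 then 1 else 0) + (if j = 3 then 1 else 0) := by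
    intro j; rw [← hb3]; exact hev j 3 g
  -- a homogeneous linear form vanishing on Z is zero
  have hlin : ∀ f : MvPolynomial (Fin 4) ℂ, f.IsHomogeneous 1 →
      (∀ q ∈ Z, eval q f = 0) → f = 0 := by
    intro f hf hv
    set cf : Fin 4 → ℂ := fun i => coeff (Finsupp.single i 1) f with hcf
    have hform : f = linForm cf := homog_one_eq_linForm hf
    set φ : (Fin 4 → ℂ) →ₗ[ℂ] ℂ := ∑ i, cf i • LinearMap.proj i with hφ
    have hφx : ∀ x, φ x = eval x f := by
      intro x
      rw [hform, eval_linForm, hφ]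
      simp [LinearMap.sum_apply, LinearMap.smul_apply, smul_eq_mul]
    have hφA : φ (a • p + v₁) = 0 := by rw [hφx]; exact hv _ mA
    have hφB : φ (b • p + v₁) = 0 := by rw [hφx]; exact hv _ mB
    have hφC : φ (c • p + v₂) = 0 := by rw [hφx]; exact hv _ mC
    have hφE : φ (e • p + v₂) = 0 := by rw [hφx]; exact hv _ mE
    have hφG : φ (g • p + v₃) = 0 := by rw [hφx]; exact hv _ mG
    rw [map_add, map_smul, smul_eq_mul] at hφA hφB hφC hφE hφG
    have hφp : φ p = 0 := by
      have hsub : (a - b) * φ p = 0 := by linear_combination hφA - hφB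
      rcases mul_eq_zero.mp hsub with h | h
      · exact absurd (sub_eq_zero.mp h) hab
      · exact h
    have hφ1 : φ v₁ = 0 := by rw [hφp, mul_zero, zero_add] at hφA; exact hφA
    have hφ2 : φ v₂ = 0 := by rw [hφp, mul_zero, zero_add] at hφC; exact hφC
    have hφ3 : φ v₃ = 0 := by rw [hφp, mul_zero, zero_add] at hφG; exact hφG
    have hφ0 : φ = 0 := by
      apply bs.ext
      intro i
      rw [LinearMap.zero_apply, hbs]
      fin_cases i
      · exact hφp
      · exact hφ1
      · exact hφ2
      · exact hφ3
    have hcf0 : ∀ i, cf i = 0 := by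
      intro i
      have := hφx (fun j' => if i = j' then 1 else 0)
      rw [hφ0, LinearMap.zero_apply, hform, eval_linForm] at this
      have h2 : (0 : ℂ) = cf i := by
        rw [this, Finset.sum_eq_single i] <;> simp +contextual [eq_comm]
      exact h2.symm
    rw [hform]
    have : cf = fun _ => (0 : ℂ) := funext hcf0
    rw [this, linForm]
    simp
  -- a homogeneous degree-0 form vanishing at a point of Z is zero
  have hconst : ∀ f : MvPolynomial (Fin 4) ℂ, f.IsHomogeneous 0 →
      eval (a • p + v₁) f = 0 → f = 0 := by
    intro f hf hv
    have hform := homog_zero_eq_C hf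
    rw [hform, eval_C] at hv
    rw [hform, hv, map_zero]
  constructor
  · -- α(I) = 2
    have h2 : 2 ∈ {d | ∃ f ∈ DiffPow Z 1, f ≠ 0 ∧ MvPolynomial.IsHomogeneous f d} := by
      refine ⟨linForm (av 2) * linForm (av 3), ?_, mul_ne_zero (hl_ne 2) (hl_ne 3),
        (linForm_isHomogeneous _).mul (linForm_isHomogeneous _)⟩
      intro q hq
      simp only [hZ, Set.mem_insert_iff, Set.mem_singleton_iff] at hq
      rcases hq with rfl | rfl | rfl | rfl | rfl
      · exact vanishTo_one_mul (by rw [hevA]; simp)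
      · exact vanishTo_one_mul (by rw [hevB]; simp)
      · rw [mul_comm]; exact vanishTo_one_mul (by rw [hevC]; simp)
      · rw [mul_comm]; exact vanishTo_one_mul (by rw [hevE]; simp)
      · exact vanishTo_one_mul (by rw [hevG]; simp)
    have hlow : ∀ d ∈ {d | ∃ f ∈ DiffPow Z 1, f ≠ 0 ∧ MvPolynomial.IsHomogeneous f d},
        2 ≤ d := by
      rintro d ⟨f, hfD, hf0, hfh⟩
      by_contra hd
      push_neg at hd
      interval_cases d
      · exact hf0 (hconst f hfh (by simpa [derivList] using hfD _ mA [] (by simp)))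
      · exact hf0 (hlin f hfh (fun q hq => by simpa [derivList] using hfD q hq [] (by simp)))
    have hne : Set.Nonempty {d | ∃ f ∈ DiffPow Z 1, f ≠ 0 ∧ MvPolynomial.IsHomogeneous f d} :=
      ⟨2, h2⟩
    exact le_antisymm (Nat.sInf_le h2) (hlow _ (Nat.sInf_mem hne))
  · -- α(I⁽²⁾) = 3
    have h3 : 3 ∈ {d | ∃ f ∈ DiffPow Z 2, f ≠ 0 ∧ MvPolynomial.IsHomogeneous f d} := by
      refine ⟨linForm (av 1) * linForm (av 2) * linForm (av 3), ?_,
        mul_ne_zero (mul_ne_zero (hl_ne 1) (hl_ne 2)) (hl_ne 3),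
        ((linForm_isHomogeneous _).mul (linForm_isHomogeneous _)).mul
          (linForm_isHomogeneous _)⟩
      intro q hq
      simp only [hZ, Set.mem_insert_iff, Set.mem_singleton_iff] at hq
      have e1 : linForm (av 1) * linForm (av 2) * linForm (av 3)
          = linForm (av 2) * linForm (av 3) * linForm (av 1) := by ring
      have e2 : linForm (av 1) * linForm (av 2) * linForm (av 3)
          = linForm (av 1) * linForm (av 3) * linForm (av 2) := by ring
      rcases hq with rfl | rfl | rfl | rfl | rfl
      · rw [e1]
        exact vanishTo_two_mul (by rw [hevA]; simp) (by rw [hevA]; simp)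
      · rw [e1]
        exact vanishTo_two_mul (by rw [hevB]; simp) (by rw [hevB]; simp)
      · rw [e2]
        exact vanishTo_two_mul (by rw [hevC]; simp) (by rw [hevC]; simp)
      · rw [e2]
        exact vanishTo_two_mul (by rw [hevE]; simp) (by rw [hevE]; simp)
      · exact vanishTo_two_mul (by rw [hevG]; simp) (by rw [hevG]; simp)
    have hlow : ∀ d ∈ {d | ∃ f ∈ DiffPow Z 2, f ≠ 0 ∧ MvPolynomial.IsHomogeneous f d},
        3 ≤ d := by
      rintro d ⟨f, hfD, hf0, hfh⟩
      by_contra hd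
      push_neg at hd
      interval_cases d
      · exact hf0 (hconst f hfh (by simpa [derivList] using hfD _ mA [] (by simp)))
      · exact hf0 (hlin f hfh (fun q hq => by simpa [derivList] using hfD q hq [] (by simp)))
      · -- the quadric case
        have hder : ∀ i : Fin 4, pderiv i f = 0 := by
          intro i
          refine hlin _ (pderiv_isHomogeneous hfh i) (fun q hq => ?_)
          simpa [derivList] using hfD q hq [i] (by simp)
        have heul := euler hfh
        have h0 : C ((2 : ℕ) : ℂ) * f = 0 := by
          rw [← heul]
          simp [hder]
        rcases mul_eq_zero.mp h0 with h | h
        · rw [MvPolynomial.C_eq_zero] at h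
          norm_num at h
        · exact hf0 h
    have hne : Set.Nonempty {d | ∃ f ∈ DiffPow Z 2, f ≠ 0 ∧ MvPolynomial.IsHomogeneous f d} :=
      ⟨3, h3⟩
    exact le_antisymm (Nat.sInf_le h3) (hlow _ (Nat.sInf_mem hne))

end Main
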